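/- Let φ be a transition function. The slow manifold of the regularized regular–focus normal form, defined implicitly by (-1-λ-y)/2 + φ(cot θ)(-1+λ+y)/2 = 0, is given for θ ∈ (π/4, 3π/4) by y(θ) = -λ + (the unique y solving it), and satisfies y(θ) → -∞ as θ → π/4⁺ and y(θ) → -λ as θ → 3π/4⁻. -/

import Mathlib

open Real Set Filter Topology

def IsTransitionFunction (φ : ℝ → ℝ) : Prop :=
  ContDiff ℝ (⊤ : ℕ∞) φ ∧ (∀ x ≤ (-1:ℝ), φ x = -1) ∧ (∀ x ≥ (1:ℝ), φ x = 1) ∧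
  ∀ x ∈ Set.Ioo (-1:ℝ) 1, 0 < deriv φ x

lemma cot_mem (θ : ℝ) (hθ : θ ∈ Ioo (π/4) (3*π/4)) : Real.cot θ ∈ Ioo (-1:ℝ) 1 := by
  obtain ⟨h1, h2⟩ := hθ
  have hpi := Real.pi_pos
  have hs : 0 < Real.sin θ := Real.sin_pos_of_pos_of_lt_pi (by linarith) (by linarith)
  have hA : 0 < Real.sin (θ - π/4) := Real.sin_pos_of_pos_of_lt_pi (by linarith) (by linarith)
  have hB : 0 < Real.sin (θ + π/4) := Real.sin_pos_of_pos_of_lt_pi (by linarith) (by linarith)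
  rw [Real.sin_sub] at hA
  rw [Real.sin_add] at hB
  have hc4 : Real.cos (π/4) = Real.sqrt 2 / 2 := Real.cos_pi_div_four
  have hs4 : Real.sin (π/4) = Real.sqrt 2 / 2 := Real.sin_pi_div_four
  have h2pos : (0:ℝ) < Real.sqrt 2 / 2 := by positivity
  rw [hc4, hs4] at hA hB
  have hlt : Real.cos θ < Real.sin θ := by nlinarith
  have hgt : -Real.sin θ < Real.cos θ := by nlinarith
  rw [Real.cot_eq_cos_div_sin]
  constructor
  · rw [lt_div_iff₀ hs]; linarith
  · rw [div_lt_one hs]; linarith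

lemma phi_lt_one {φ : ℝ → ℝ} (hφ : IsTransitionFunction φ) {x : ℝ}
    (hx : x ∈ Ioo (-1:ℝ) 1) : φ x < 1 := by
  obtain ⟨hcd, hneg, hpos, hderiv⟩ := hφ
  have hmono : StrictMonoOn φ (Icc (-1:ℝ) 1) := by
    apply strictMonoOn_of_deriv_pos (convex_Icc _ _)
    · exact hcd.continuous.continuousOn
    · rw [interior_Icc]; exact hderiv
  have := hmono ⟨hx.1.le, hx.2.le⟩ (by constructor <;> norm_num : (1:ℝ) ∈ Icc (-1:ℝ) 1) hx.2
  rwa [hpos 1 le_rfl] at this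

lemma cot_cont (θ : ℝ) (hs : Real.sin θ ≠ 0) : ContinuousAt Real.cot θ := by
  have : ContinuousAt (fun x => Real.cos x / Real.sin x) θ :=
    (Real.continuous_cos.continuousAt).div (Real.continuous_sin.continuousAt) hs
  refine this.congr ?_
  filter_upwards [Real.continuous_sin.continuousAt.eventually_ne hs] with x hx
  rw [Real.cot_eq_cos_div_sin]

theorem stmt3 (φ : ℝ → ℝ) (hφ : IsTransitionFunction φ) (lam : ℝ)
    (hlam : lam ∈ Ioo (-1:ℝ) 1) :
    (∀ θ ∈ Ioo (π/4) (3*π/4), ∀ y : ℝ,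
        ((-1 - lam - y)/2 + φ (Real.cot θ) * (-1 + lam + y)/2 = 0 ↔
          y = -lam - (1 + φ (Real.cot θ)) / (1 - φ (Real.cot θ)))) ∧
    Tendsto (fun θ => -lam - (1 + φ (Real.cot θ)) / (1 - φ (Real.cot θ)))
      (𝓝[>] (π/4)) atBot ∧
    Tendsto (fun θ => -lam - (1 + φ (Real.cot θ)) / (1 - φ (Real.cot θ)))
      (𝓝[<] (3*π/4)) (𝓝 (-lam)) := by
  have hpi := Real.pi_pos
  have hcont : Continuous φ := hφ.1.continuous
  -- eventual membership
  have hmem1 : ∀ᶠ θ in 𝓝[>] (π/4), θ ∈ Ioo (π/4) (3*π/4) :=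
    Ioo_mem_nhdsGT_of_mem ⟨le_rfl, by linarith⟩
  have hmem2 : ∀ᶠ θ in 𝓝[<] (3*π/4), θ ∈ Ioo (π/4) (3*π/4) :=
    Ioo_mem_nhdsLT_of_mem ⟨by linarith, le_rfl⟩
  refine ⟨?_, ?_, ?_⟩
  · intro θ hθ y
    set c := φ (Real.cot θ) with hc
    have hclt : c < 1 := phi_lt_one hφ (cot_mem θ hθ)
    have hne : (1:ℝ) - c ≠ 0 := by linarith
    constructor
    · intro h
      field_simp
      linarith [mul_comm c y, mul_comm c lam]
    · intro h
      subst h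
      field_simp
      ring
  · -- θ → π/4⁺
    have hcot14 : Real.cot (π/4) = 1 := by
      rw [Real.cot_eq_cos_div_sin, Real.cos_pi_div_four, Real.sin_pi_div_four]
      norm_num
    have hsin14 : Real.sin (π/4) ≠ 0 :=
      ne_of_gt (Real.sin_pos_of_pos_of_lt_pi (by linarith) (by linarith))
    have h1 : Tendsto (fun θ => Real.cot θ) (𝓝[>] (π/4)) (𝓝 1) := by
      have := (cot_cont (π/4) hsin14).tendsto
      rw [hcot14] at this
      exact this.mono_left nhdsWithin_le_nhds
    have hφ1 : Tendsto (fun θ => φ (Real.cot θ)) (𝓝[>] (π/4)) (𝓝 1) := by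
      have := (hcont.tendsto 1).comp h1
      rwa [show φ 1 = 1 from hφ.2.2.1 1 le_rfl] at this
    have hlt1 : ∀ᶠ θ in 𝓝[>] (π/4), φ (Real.cot θ) < 1 := by
      filter_upwards [hmem1] with θ hθ
      exact phi_lt_one hφ (cot_mem θ hθ)
    have hdenom : Tendsto (fun θ => 1 - φ (Real.cot θ)) (𝓝[>] (π/4)) (𝓝[>] 0) := by
      rw [tendsto_nhdsWithin_iff]
      constructor
      · have := (tendsto_const_nhds (x := (1:ℝ))).sub hφ1
        simpa using this
      · filter_upwards [hlt1] with θ h; simp [mem_Ioi]; linarith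
    have hinv : Tendsto (fun θ => (1 - φ (Real.cot θ))⁻¹) (𝓝[>] (π/4)) atTop :=
      tendsto_inv_nhdsGT_zero.comp hdenom
    have hnum : Tendsto (fun θ => 1 + φ (Real.cot θ)) (𝓝[>] (π/4)) (𝓝 2) := by
      have := (tendsto_const_nhds (x := (1:ℝ))).add hφ1
      norm_num at this
      exact this
    have hfrac : Tendsto (fun θ => (1 + φ (Real.cot θ)) / (1 - φ (Real.cot θ)))
        (𝓝[>] (π/4)) atTop := by
      have := Filter.Tendsto.pos_mul_atTop (by norm_num : (0:ℝ) < 2) hnum hinv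
      simpa [div_eq_mul_inv] using this
    have : Tendsto (fun θ => -lam - (1 + φ (Real.cot θ)) / (1 - φ (Real.cot θ)))
        (𝓝[>] (π/4)) atBot := by
      have := tendsto_neg_atTop_atBot.comp hfrac
      simpa [sub_eq_add_neg] using tendsto_atBot_add_const_left _ (-lam) this
    exact this
  · -- θ → 3π/4⁻
    have hcot34 : Real.cot (3*π/4) = -1 := by
      have : (3:ℝ)*π/4 = π - π/4 := by ring
      rw [Real.cot_eq_cos_div_sin, this, Real.cos_pi_sub, Real.sin_pi_sub,
        Real.cos_pi_div_four, Real.sin_pi_div_four]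
      norm_num
    have hsin34 : Real.sin (3*π/4) ≠ 0 :=
      ne_of_gt (Real.sin_pos_of_pos_of_lt_pi (by linarith) (by linarith))
    have h1 : Tendsto (fun θ => Real.cot θ) (𝓝[<] (3*π/4)) (𝓝 (-1)) := by
      have := (cot_cont (3*π/4) hsin34).tendsto
      rw [hcot34] at this
      exact this.mono_left nhdsWithin_le_nhds
    have hφ1 : Tendsto (fun θ => φ (Real.cot θ)) (𝓝[<] (3*π/4)) (𝓝 (-1)) := by
      have := (hcont.tendsto (-1)).comp h1
      rwa [show φ (-1) = -1 from hφ.2.1 (-1) le_rfl] at this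
    have hfrac : Tendsto (fun θ => (1 + φ (Real.cot θ)) / (1 - φ (Real.cot θ)))
        (𝓝[<] (3*π/4)) (𝓝 0) := by
      have hnum : Tendsto (fun θ => 1 + φ (Real.cot θ)) (𝓝[<] (3*π/4)) (𝓝 0) := by
        have := (tendsto_const_nhds (x := (1:ℝ))).add hφ1
        norm_num at this
        exact this
      have hden : Tendsto (fun θ => 1 - φ (Real.cot θ)) (𝓝[<] (3*π/4)) (𝓝 2) := by
        have := (tendsto_const_nhds (x := (1:ℝ))).sub hφ1
        norm_num at this
        exact this
      have := hnum.div hden (by norm_num)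
      rw [zero_div] at this; exact this
    have := (tendsto_const_nhds (x := -lam)).sub hfrac
    simpa using this
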